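/- Monotonicity implies the Individual-Global-Max (IGM) property: if Q_joint(u₁,...,u_m) = F(Q₁(u₁),...,Q_m(u_m)) where F : ℝ^m → ℝ is strictly increasing in each coordinate, then the joint action maximizing Q_joint is obtained by each agent independently maximizing its own Q_i, i.e., argmax over the joint action space of Q_joint equals the tuple of individual argmaxes (assuming each argmax is attained and unique). -/

import Mathlib

/-!
A function that is strictly increasing in each coordinate is strictly monotone for the product
order: from `x < y` one reaches `y` by raising the coordinates of `x` one at a time, and at
least one of these steps is strict.
The tuple of individual maxima dominates every joint value vector coordinatewise, so it gives
the largest joint value, and any other joint action differs from it in a coordinate where its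
individual value is strictly smaller.
-/

open Function

section CoordinatewiseStrictMono

variable {ι : Type*} {α : ι → Type*} {β : Type*} [Preorder β] {F : (∀ i, α i) → β}

theorem lt_apply_update_of_coord [DecidableEq ι] [∀ i, Preorder (α i)]
    (hF : ∀ (x x' : ∀ i, α i) (i : ι), x i < x' i → (∀ j, j ≠ i → x j = x' j) → F x < F x')
    {x : ∀ i, α i} {i : ι} {a : α i} (h : x i < a) : F x < F (update x i a) :=
  hF _ _ i (by rwa [update_self]) fun _ hj => (update_of_ne hj _ _).symm

theorem monotone_of_strictMono_coord [Finite ι] [∀ i, PartialOrder (α i)]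
    (hF : ∀ (x x' : ∀ i, α i) (i : ι), x i < x' i → (∀ j, j ≠ i → x j = x' j) → F x < F x') :
    Monotone F := by
  classical
  cases nonempty_fintype ι
  suffices h : ∀ s : Finset ι, ∀ x y, x ≤ y → (∀ j ∉ s, x j = y j) → F x ≤ F y from
    fun x y hxy => h Finset.univ x y hxy (by simp)
  intro s
  induction s using Finset.induction_on with
  | empty =>
    intro x y _ hoff
    rw [funext fun j => hoff j (Finset.notMem_empty j)]
  | insert i s _ ih =>
    intro x y hxy hoff
    have hstep : F x ≤ F (update x i (y i)) := by
      rcases (hxy i).lt_or_eq with hlt | heq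
      · exact (lt_apply_update_of_coord hF hlt).le
      · rw [← heq, update_eq_self]
    refine hstep.trans (ih _ _ (update_le_iff.2 ⟨le_rfl, fun j _ => hxy j⟩) fun j hj => ?_)
    rcases eq_or_ne j i with rfl | hji
    · rw [update_self]
    · rw [update_of_ne hji]
      exact hoff j (by simp [hji, hj])

theorem strictMono_of_strictMono_coord [Finite ι] [∀ i, PartialOrder (α i)]
    (hF : ∀ (x x' : ∀ i, α i) (i : ι), x i < x' i → (∀ j, j ≠ i → x j = x' j) → F x < F x') :
    StrictMono F := by
  classical
  intro x y hxy
  obtain ⟨hle, i, hi⟩ := Pi.lt_def.1 hxy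
  calc F x < F (update x i (y i)) := lt_apply_update_of_coord hF hi
    _ ≤ F y := monotone_of_strictMono_coord hF (update_le_iff.2 ⟨le_rfl, fun j _ => hle j⟩)

end CoordinatewiseStrictMono

theorem monotone_implies_IGM_general {m : ℕ} {U : Fin m → Type*}
    (Q : ∀ i, U i → ℝ) (F : (Fin m → ℝ) → ℝ)
    (hF : ∀ (x x' : Fin m → ℝ) (i : Fin m),
      x i < x' i → (∀ j, j ≠ i → x j = x' j) → F x < F x')
    (ustar : ∀ i, U i)
    (hstar : ∀ i, ∀ v : U i, v ≠ ustar i → Q i v < Q i (ustar i)) :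
    ∀ u : ∀ i, U i,
      (∀ u' : ∀ i, U i, F (fun i => Q i (u' i)) ≤ F (fun i => Q i (u i)))
        ↔ u = ustar := by
  have hF_strictMono : StrictMono F := strictMono_of_strictMono_coord hF
  have hdom : ∀ w : ∀ i, U i, (fun i => Q i (w i)) ≤ fun i => Q i (ustar i) := fun w i => by
    rcases eq_or_ne (w i) (ustar i) with h | h
    · exact (congrArg (Q i) h).le
    · exact (hstar i (w i) h).le
  intro u
  constructor
  · intro hmax
    have hvalues : (fun i => Q i (u i)) = fun i => Q i (ustar i) := by
      by_contra hne
      exact (hmax ustar).not_gt (hF_strictMono (lt_of_le_of_ne (hdom u) hne))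
    funext i
    by_contra hi
    exact (hstar i (u i) hi).ne (congrFun hvalues i)
  · rintro rfl u'
    exact hF_strictMono.monotone (hdom u')

/-- Monotonicity implies IGM: if `F` is strictly increasing in each coordinate and
each `Q i` has a unique maximizer `ustar i`, then `ustar` is the unique maximizer of
the joint value `F (fun i => Q i (u i))`: any joint action `u` is a maximizer of the
joint value iff `u = ustar`. -/
theorem monotone_implies_IGM {m : ℕ} {U : Fin m → Type*}
    [∀ i, Fintype (U i)] [∀ i, Nonempty (U i)]
    (Q : ∀ i, U i → ℝ) (F : (Fin m → ℝ) → ℝ)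
    (hF : ∀ (x x' : Fin m → ℝ) (i : Fin m),
      x i < x' i → (∀ j, j ≠ i → x j = x' j) → F x < F x')
    (ustar : ∀ i, U i)
    (hstar : ∀ i, ∀ v : U i, v ≠ ustar i → Q i v < Q i (ustar i)) :
    ∀ u : ∀ i, U i,
      (∀ u' : ∀ i, U i, F (fun i => Q i (u' i)) ≤ F (fun i => Q i (u i)))
        ↔ u = ustar :=
  monotone_implies_IGM_general Q F hF ustar hstar
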